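/- Let m, n ≥ 1 and let A : ℝⁿ → M_m(ℂ) be a function. Suppose there exist D' > 0 and l ∈ ℕ with ‖A(ξ)‖ ≤ D'(1+|ξ|)^l for all ξ ∈ ℝⁿ, and there exists C > 0 with max{Re λ : λ ∈ σ(A(ξ))} ≤ C(1 + log(1+|ξ|)) for all ξ ∈ ℝⁿ. Then for every T > 0 there exists D > 0 such that ‖exp(tA(ξ))‖ ≤ D (1+|ξ|)^{TC + l(m−1)} whenever t ∈ [0,T] and ξ ∈ ℝⁿ. -/

import Mathlib

/-!
Schur's theorem writes `t • A(ξ) = U T U*` with `U` unitary and `T` upper triangular, the diagonal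
of `T` consisting of eigenvalues. Conjugating `T` by `diag(ε^i)` multiplies each entry above the
diagonal by a positive power of `ε`, at the price of a factor `ε^{-(m-1)}` in norm; for
`ε = (1 + m²‖T‖)⁻¹` the off-diagonal part has norm at most `1`. By Duhamel's formula and Grönwall's
inequality, a perturbation of norm `≤ 1` of a diagonal matrix with eigenvalues of real part `≤ a`
has exponential of norm `≤ e^{a + 1}`. Hence `‖exp (t • B)‖ ≤ e^{ta + 1} (1 + m² t ‖B‖)^{m-1}`
whenever the spectrum of `B` lies in `Re ≤ a`; the spectral hypothesis turns `e^{ta}` into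
`(1 + |ξ|)^{TC}` and the norm hypothesis the polynomial factor into `(1 + |ξ|)^{l(m-1)}`.
-/

open scoped Matrix.Norms.L2Operator
open NormedSpace Matrix Set Module
open scoped InnerProductSpace

theorem le_mul_exp_of_le_add_mul_integral {φ : ℝ → ℝ} (hφ : Continuous φ) {δ K t : ℝ}
    (hK : 0 ≤ K) (h : ∀ s ∈ Icc 0 t, φ s ≤ δ + K * ∫ u in (0)..s, φ u) :
    ∀ s ∈ Icc 0 t, φ s ≤ δ * Real.exp (K * s) := by
  set ψ : ℝ → ℝ := fun s => ∫ u in (0)..s, φ u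
  have hψ : ∀ s, HasDerivAt ψ (φ s) s := fun s => (hφ.integral_hasStrictDerivAt 0 s).hasDerivAt
  have hψ_le : ∀ s ∈ Icc 0 t, ψ s ≤ gronwallBound 0 K δ s := by
    simpa using le_gronwallBound_of_liminf_deriv_right_le (f := ψ) (f' := φ) (a := 0) (b := t)
      (fun s _ => (hψ s).continuousAt.continuousWithinAt)
      (fun s _ _ hr => (hψ s).hasDerivWithinAt.liminf_right_slope_le hr)
      (by simp [ψ]) (fun s hs => (h s (Ico_subset_Icc_self hs)).trans_eq (add_comm _ _))
  intro s hs
  calc φ s ≤ δ + K * gronwallBound 0 K δ s := (h s hs).trans (by gcongr; exact hψ_le s hs)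
    _ = δ * Real.exp (K * s) := by
      rcases hK.eq_or_lt with rfl | hK
      · simp
      · rw [gronwallBound_of_K_ne_0 hK.ne']
        field_simp
        ring

section Perturbation

variable {𝔸 : Type*} [NormedRing 𝔸] [NormedAlgebra ℝ 𝔸] [CompleteSpace 𝔸]

theorem continuous_exp_smul (X : 𝔸) : Continuous fun u : ℝ => exp (u • X) :=
  continuous_iff_continuousAt.2 fun u => (hasDerivAt_exp_smul_const X u).continuousAt

theorem exp_smul_add_eq_add_integral (X Y : 𝔸) (t : ℝ) :
    exp (t • (X + Y)) =
      exp (t • X) + ∫ u in (0)..t, exp ((t - u) • X) * Y * exp (u • (X + Y)) := by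
  have hG : ∀ u, HasDerivAt (fun u : ℝ => exp ((t - u) • X) * exp (u • (X + Y)))
      (exp ((t - u) • X) * Y * exp (u • (X + Y))) u := by
    intro u
    have h₁ : HasDerivAt (fun u : ℝ => exp ((t - u) • X)) (-(exp ((t - u) • X) * X)) u := by
      have := (hasDerivAt_exp_smul_const X (t - u)).scomp u ((hasDerivAt_id u).const_sub t)
      rwa [neg_one_smul] at this
    refine (h₁.mul (hasDerivAt_exp_smul_const' (X + Y) u)).congr_deriv ?_
    simp only [neg_mul, mul_add, add_mul, ← mul_assoc]
    abel
  have hcont : Continuous fun u => exp ((t - u) • X) * Y * exp (u • (X + Y)) :=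
    (((continuous_exp_smul X).comp (continuous_const.sub continuous_id)).mul
      continuous_const).mul (continuous_exp_smul _)
  rw [intervalIntegral.integral_eq_sub_of_hasDerivAt (fun u _ => hG u)
    (hcont.intervalIntegrable _ _)]
  simp

theorem norm_exp_smul_add_le_mul_integral {X : 𝔸} {a : ℝ}
    (hX : ∀ s, 0 ≤ s → ‖exp (s • X)‖ ≤ Real.exp (a * s)) (Y : 𝔸) {s : ℝ} (hs : 0 ≤ s) :
    ‖exp (s • (X + Y))‖ ≤ Real.exp (a * s) *
      (1 + ‖Y‖ * ∫ u in (0)..s, Real.exp (-(a * u)) * ‖exp (u • (X + Y))‖) := by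
  set φ : ℝ → ℝ := fun u => Real.exp (-(a * u)) * ‖exp (u • (X + Y))‖
  have hφ : Continuous φ := by
    have := continuous_exp_smul (X + Y)
    fun_prop
  have hpt : ∀ u ∈ Ioc 0 s, ‖exp ((s - u) • X) * Y * exp (u • (X + Y))‖ ≤
      Real.exp (a * s) * (‖Y‖ * φ u) := by
    intro u hu
    calc _ ≤ ‖exp ((s - u) • X)‖ * ‖Y‖ * ‖exp (u • (X + Y))‖ := norm_mul₃_le
      _ ≤ Real.exp (a * (s - u)) * ‖Y‖ * ‖exp (u • (X + Y))‖ := by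
        gcongr; exact hX _ (sub_nonneg.2 hu.2)
      _ = Real.exp (a * s) * (‖Y‖ * φ u) := by
        simp only [φ, mul_sub, Real.exp_sub, Real.exp_neg]; field_simp
  rw [exp_smul_add_eq_add_integral]
  calc _ ≤ ‖exp (s • X)‖ + ‖∫ u in (0)..s, exp ((s - u) • X) * Y * exp (u • (X + Y))‖ :=
        norm_add_le _ _
    _ ≤ Real.exp (a * s) + ∫ u in (0)..s, Real.exp (a * s) * (‖Y‖ * φ u) := by
      gcongr
      · exact hX s hs
      · exact intervalIntegral.norm_integral_le_of_norm_le hs (Filter.Eventually.of_forall hpt)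
          ((continuous_const.mul (continuous_const.mul hφ)).intervalIntegrable _ _)
    _ = _ := by
      rw [intervalIntegral.integral_const_mul, intervalIntegral.integral_const_mul]; ring

theorem norm_exp_smul_add_le {X : 𝔸} {a : ℝ}
    (hX : ∀ s, 0 ≤ s → ‖exp (s • X)‖ ≤ Real.exp (a * s)) (Y : 𝔸) {t : ℝ} (ht : 0 ≤ t) :
    ‖exp (t • (X + Y))‖ ≤ Real.exp ((a + ‖Y‖) * t) := by
  set φ : ℝ → ℝ := fun s => Real.exp (-(a * s)) * ‖exp (s • (X + Y))‖
  have hφ : Continuous φ := by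
    have := continuous_exp_smul (X + Y)
    fun_prop
  have hint : ∀ s ∈ Icc 0 t, φ s ≤ 1 + ‖Y‖ * ∫ u in (0)..s, φ u := fun s hs =>
    calc φ s ≤ Real.exp (-(a * s)) * (Real.exp (a * s) * (1 + ‖Y‖ * ∫ u in (0)..s, φ u)) :=
          mul_le_mul_of_nonneg_left (norm_exp_smul_add_le_mul_integral hX Y hs.1)
            (Real.exp_nonneg _)
      _ = _ := by rw [← mul_assoc, ← Real.exp_add, neg_add_cancel, Real.exp_zero, one_mul]
  have hφt := le_mul_exp_of_le_add_mul_integral hφ (norm_nonneg Y) hint t ⟨ht, le_rfl⟩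
  calc ‖exp (t • (X + Y))‖ = Real.exp (a * t) * φ t := by
        simp only [φ, ← mul_assoc, ← Real.exp_add, add_neg_cancel, Real.exp_zero, one_mul]
    _ ≤ Real.exp (a * t) * (1 * Real.exp (‖Y‖ * t)) := by gcongr
    _ = Real.exp ((a + ‖Y‖) * t) := by rw [one_mul, ← Real.exp_add, add_mul]

end Perturbation

theorem Module.End.exists_norm_eq_one_orthogonal_invariant {E : Type*} [NormedAddCommGroup E]
    [InnerProductSpace ℂ E] [FiniteDimensional ℂ E] [Nontrivial E] (f : Module.End ℂ E) :
    ∃ u : E, ‖u‖ = 1 ∧ ∀ w ∈ (ℂ ∙ u)ᗮ, f w ∈ (ℂ ∙ u)ᗮ := by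
  obtain ⟨μ, hμ⟩ := Module.End.exists_eigenvalue (LinearMap.adjoint f)
  obtain ⟨v, hv⟩ := hμ.exists_hasEigenvector
  refine ⟨‖v‖⁻¹ • v, norm_smul_inv_norm hv.2, fun w hw => ?_⟩
  rw [Submodule.mem_orthogonal_singleton_iff_inner_right] at hw ⊢
  rw [← LinearMap.adjoint_inner_left, LinearMap.map_smul_of_tower, hv.apply_eq_smul, smul_comm,
    inner_smul_left, hw, mul_zero]

theorem Module.End.exists_orthonormal_schur {E : Type*} [NormedAddCommGroup E]
    [InnerProductSpace ℂ E] [FiniteDimensional ℂ E] (f : Module.End ℂ E) {k : ℕ}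
    (hk : finrank ℂ E = k) :
    ∃ b : Fin k → E, Orthonormal ℂ b ∧ ∀ i j, j < i → ⟪b i, f (b j)⟫_ℂ = 0 := by
  induction k generalizing E with
  | zero => exact ⟨Fin.elim0, by simp, fun i => i.elim0⟩
  | succ k ih =>
    have : Nontrivial E := nontrivial_of_finrank_eq_succ hk
    have : Fact (finrank ℂ E = k + 1) := ⟨hk⟩
    obtain ⟨u, hu, hW⟩ := f.exists_norm_eq_one_orthogonal_invariant
    obtain ⟨b, hb, htri⟩ := ih (f.restrict hW)
      (Submodule.finrank_orthogonal_span_singleton (norm_ne_zero_iff.1 (hu.trans_ne one_ne_zero)))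
    have hb' : Orthonormal ℂ fun i => (b i : E) := hb.comp_linearIsometry (ℂ ∙ u)ᗮ.subtypeₗᵢ
    have hbu : ∀ i, ⟪u, (b i : E)⟫_ℂ = 0 := fun i =>
      Submodule.mem_orthogonal_singleton_iff_inner_right.1 (b i).2
    refine ⟨Fin.snoc (fun i => (b i : E)) u, ?_, fun i j hji => ?_⟩
    · rw [orthonormal_iff_ite] at hb' ⊢
      intro i j
      induction i using Fin.lastCases <;> induction j using Fin.lastCases <;>
        simp [hb', hbu, inner_eq_zero_symm.1 (hbu _), inner_self_eq_norm_sq_to_K, hu,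
          Fin.castSucc_ne_last, (Fin.castSucc_ne_last _).symm]
    · induction j using Fin.lastCases with
      | last => exact absurd (Fin.le_last i) hji.not_ge
      | cast j =>
        induction i using Fin.lastCases with
        | last => simpa using Submodule.mem_orthogonal_singleton_iff_inner_right.1 (hW _ (b j).2)
        | cast i => simpa using htri i j (Fin.castSucc_lt_castSucc_iff.1 hji)

namespace Matrix

section Norms

variable {𝕜 m n : Type*} [RCLike 𝕜] [Fintype m] [Fintype n] [DecidableEq n]

theorem norm_apply_le_l2_opNorm (M : Matrix m n 𝕜) (i : m) (j : n) : ‖M i j‖ ≤ ‖M‖ := by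
  have h := M.l2_opNorm_mulVec (EuclideanSpace.single j 1)
  rw [PiLp.norm_single, norm_one, mul_one] at h
  refine le_trans (le_of_eq ?_) ((PiLp.norm_apply_le _ i).trans h)
  simp

theorem l2_opNorm_single [DecidableEq m] (i : m) (j : n) (c : 𝕜) : ‖single i j c‖ = ‖c‖ := by
  have h := l2_opNorm_conjTranspose_mul_self (single i j c)
  rw [conjTranspose_single, single_mul_single_same, ← diagonal_single, l2_opNorm_diagonal,
    Pi.norm_single, norm_mul, norm_star] at h
  exact (mul_self_inj (norm_nonneg _) (norm_nonneg _)).1 h.symm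

theorem l2_opNorm_le_sum_norm_apply [DecidableEq m] (M : Matrix m n 𝕜) :
    ‖M‖ ≤ ∑ i, ∑ j, ‖M i j‖ := by
  conv_lhs => rw [M.matrix_eq_sum_single]
  exact (norm_sum_le _ _).trans <| Finset.sum_le_sum fun i _ =>
    (norm_sum_le _ _).trans <| Finset.sum_le_sum fun j _ => (l2_opNorm_single i j _).le

end Norms

theorem norm_exp_smul_diagonal_le {n : Type*} [Fintype n] [DecidableEq n] {v : n → ℂ} {a : ℝ}
    (hv : ∀ i, (v i).re ≤ a) {s : ℝ} (hs : 0 ≤ s) :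
    ‖exp (s • diagonal v)‖ ≤ Real.exp (a * s) := by
  rw [← diagonal_smul, exp_diagonal, l2_opNorm_diagonal]
  refine pi_norm_le_iff_of_nonneg (Real.exp_nonneg _) |>.2 fun i => ?_
  rw [Pi.exp_def, ← Complex.exp_eq_exp_ℂ, Complex.norm_exp, Pi.smul_apply, Complex.real_smul,
    Complex.re_ofReal_mul, mul_comm]
  gcongr
  exact hv i

theorem IsUpperTriangular.apply_mem_spectrum {K n : Type*} [Field K] [Fintype n] [DecidableEq n]
    [LinearOrder n] {M : Matrix n n K} (hM : M.IsUpperTriangular) (i : n) :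
    M i i ∈ spectrum K M := by
  rw [mem_spectrum_iff_isRoot_charpoly, charpoly_of_isUpperTriangular M hM, Polynomial.IsRoot,
    Polynomial.eval_prod]
  exact Finset.prod_eq_zero (Finset.mem_univ i) (by simp)

theorem star_of_mul_mul_of_apply {𝕜 n : Type*} [RCLike 𝕜] [Fintype n] [DecidableEq n]
    (b : n → EuclideanSpace 𝕜 n) (M : Matrix n n 𝕜) (i j : n) :
    (star (of fun i j => b j i) * M * of fun i j => b j i) i j =
      ⟪b i, toEuclideanLin M (b j)⟫_𝕜 := by
  simp only [mul_apply, star_apply, of_apply, EuclideanSpace.inner_eq_star_dotProduct, dotProduct,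
    ofLp_toLpLin, toLin'_apply, mulVec, Finset.sum_mul, Pi.star_apply]
  rw [Finset.sum_comm]
  exact Finset.sum_congr rfl fun _ _ => Finset.sum_congr rfl fun _ _ => by ring

variable {m : ℕ}

theorem exists_mem_unitaryGroup_isUpperTriangular (B : Matrix (Fin m) (Fin m) ℂ) :
    ∃ U ∈ unitaryGroup (Fin m) ℂ, (star U * B * U).IsUpperTriangular := by
  obtain ⟨b, hb, htri⟩ :=
    Module.End.exists_orthonormal_schur (toEuclideanLin B) finrank_euclideanSpace_fin
  refine ⟨of fun i j => b j i, mem_unitaryGroup_iff'.2 ?_, fun i j hji => ?_⟩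
  · ext i j
    have h := star_of_mul_mul_of_apply b 1 i j
    simp only [mul_one, toLpLin_one, LinearMap.id_coe, id_eq] at h
    rw [h, one_apply, orthonormal_iff_ite.1 hb]
  · rw [star_of_mul_mul_of_apply]
    exact htri i j hji

theorem IsUpperTriangular.norm_diagonal_conj_sub_le {T : Matrix (Fin m) (Fin m) ℂ}
    (hT : T.IsUpperTriangular) {ε : ℝ} (hε₀ : 0 < ε) (hε₁ : ε ≤ 1) :
    ‖diagonal (fun i : Fin m => (ε : ℂ)⁻¹ ^ (i : ℕ)) * T *
        diagonal (fun i : Fin m => (ε : ℂ) ^ (i : ℕ)) - diagonal (fun i => T i i)‖ ≤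
      m ^ 2 * ε * ‖T‖ := by
  refine (l2_opNorm_le_sum_norm_apply _).trans ?_
  have hentry : ∀ i j : Fin m,
      ‖(ε : ℂ)⁻¹ ^ (i : ℕ) * T i j * (ε : ℂ) ^ (j : ℕ) - diagonal (fun i => T i i) i j‖ ≤
        ε * ‖T‖ := by
    intro i j
    rcases lt_trichotomy i j with hij | rfl | hij
    · rw [diagonal_apply_ne _ hij.ne, sub_zero, norm_mul, norm_mul, norm_pow, norm_pow, norm_inv,
        Complex.norm_real, Real.norm_of_nonneg hε₀.le, mul_right_comm]
      have hpow : ε⁻¹ ^ (i : ℕ) * ε ^ (j : ℕ) = ε ^ ((j : ℕ) - i) := by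
        rw [pow_sub₀ _ hε₀.ne' hij.le, inv_pow, mul_comm]
      rw [hpow]
      exact mul_le_mul (pow_le_of_le_one hε₀.le hε₁ (Nat.sub_ne_zero_of_lt hij))
        (norm_apply_le_l2_opNorm T i j) (norm_nonneg _) hε₀.le
    · have hε : (ε : ℂ) ≠ 0 := Complex.ofReal_ne_zero.2 hε₀.ne'
      rw [diagonal_apply_eq, mul_right_comm, ← mul_pow, inv_mul_cancel₀ hε, one_pow, one_mul,
        sub_self, norm_zero]
      positivity
    · rw [hT hij, diagonal_apply_ne _ hij.ne', mul_zero, zero_mul, sub_zero, norm_zero]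
      positivity
  calc _ ≤ ∑ _i : Fin m, ∑ _j : Fin m, ε * ‖T‖ := by
        gcongr with i _ j _
        simpa [diagonal_mul, mul_diagonal] using hentry i j
    _ = _ := by
        simp only [Finset.sum_const, Finset.card_univ, Fintype.card_fin, nsmul_eq_mul]
        ring

theorem IsUpperTriangular.norm_exp_le_of_scale {T : Matrix (Fin m) (Fin m) ℂ}
    (hT : T.IsUpperTriangular) {a : ℝ} (ha : ∀ i, (T i i).re ≤ a) {ε : ℝ} (hε₀ : 0 < ε)
    (hε₁ : ε ≤ 1) :
    ‖exp T‖ ≤ ε⁻¹ ^ (m - 1) * Real.exp (a + m ^ 2 * ε * ‖T‖) := by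
  have hε : (ε : ℂ) ≠ 0 := Complex.ofReal_ne_zero.2 hε₀.ne'
  let D : (Matrix (Fin m) (Fin m) ℂ)ˣ :=
    ⟨diagonal fun i => (ε : ℂ) ^ (i : ℕ), diagonal fun i => (ε : ℂ)⁻¹ ^ (i : ℕ),
      by simp [hε], by simp [hε]⟩
  set T' := (D⁻¹ * T * D : Matrix (Fin m) (Fin m) ℂ)
  have hexp : exp T = D * exp T' * D⁻¹ := by
    rw [← exp_units_conj, ← mul_assoc, ← mul_assoc, Units.mul_inv, one_mul, mul_assoc,
      Units.mul_inv, mul_one]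
  have hD : ‖(D : Matrix (Fin m) (Fin m) ℂ)‖ ≤ 1 := by
    refine (l2_opNorm_diagonal _).trans_le <| pi_norm_le_iff_of_nonneg zero_le_one |>.2 fun i => ?_
    rw [norm_pow, Complex.norm_real, Real.norm_of_nonneg hε₀.le]
    exact pow_le_one₀ hε₀.le hε₁
  have hD' :
      ‖((D⁻¹ : (Matrix (Fin m) (Fin m) ℂ)ˣ) : Matrix (Fin m) (Fin m) ℂ)‖ ≤ ε⁻¹ ^ (m - 1) := by
    refine (l2_opNorm_diagonal _).trans_le <|
      pi_norm_le_iff_of_nonneg (by positivity) |>.2 fun i => ?_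
    rw [norm_pow, norm_inv, Complex.norm_real, Real.norm_of_nonneg hε₀.le]
    exact pow_le_pow_right₀ (one_le_inv₀ hε₀ |>.2 hε₁) (by omega)
  have hT' : ‖exp T'‖ ≤ Real.exp (a + m ^ 2 * ε * ‖T‖) := by
    have hN : ‖T' - diagonal fun i => T i i‖ ≤ m ^ 2 * ε * ‖T‖ :=
      hT.norm_diagonal_conj_sub_le hε₀ hε₁
    have h := norm_exp_smul_add_le (fun s hs => norm_exp_smul_diagonal_le ha hs)
      (T' - diagonal fun i => T i i) zero_le_one
    rw [one_smul, add_sub_cancel, mul_one] at h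
    exact h.trans (Real.exp_le_exp.2 (by linarith))
  rw [hexp]
  calc _ ≤ _ := norm_mul₃_le
    _ ≤ 1 * Real.exp (a + m ^ 2 * ε * ‖T‖) * ε⁻¹ ^ (m - 1) := by gcongr
    _ = _ := by ring

theorem IsUpperTriangular.norm_exp_le {T : Matrix (Fin m) (Fin m) ℂ} (hT : T.IsUpperTriangular)
    {a : ℝ} (ha : ∀ i, (T i i).re ≤ a) :
    ‖exp T‖ ≤ Real.exp (a + 1) * (1 + m ^ 2 * ‖T‖) ^ (m - 1) := by
  have hK : 0 ≤ (m : ℝ) ^ 2 * ‖T‖ := by positivity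
  have h := hT.norm_exp_le_of_scale ha (ε := (1 + m ^ 2 * ‖T‖)⁻¹) (by positivity)
    (inv_le_one_of_one_le₀ (by linarith))
  rw [inv_inv, mul_comm] at h
  refine h.trans ?_
  gcongr
  rw [mul_right_comm, ← div_eq_mul_inv, div_le_one (by positivity)]
  linarith

theorem norm_exp_smul_le_of_re_le (B : Matrix (Fin m) (Fin m) ℂ) {a : ℝ}
    (hB : ∀ μ ∈ spectrum ℂ B, μ.re ≤ a) {t : ℝ} (ht : 0 ≤ t) :
    ‖exp (t • B)‖ ≤ Real.exp (a * t + 1) * (1 + m ^ 2 * (t * ‖B‖)) ^ (m - 1) := by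
  obtain ⟨U, hU, hT⟩ := exists_mem_unitaryGroup_isUpperTriangular B
  let V : unitary (Matrix (Fin m) (Fin m) ℂ) := ⟨U, hU⟩
  set T := star U * B * U
  have hconj : t • B = V * (t • T) * (star V : unitary _) := by
    have hUU : U * star U = 1 := Unitary.mul_star_self_of_mem hU
    calc t • B = t • (U * star U * B * (U * star U)) := by rw [hUU, one_mul, mul_one]
      _ = _ := by simp only [T, V, mul_smul_comm, smul_mul_assoc, mul_assoc, Unitary.coe_star]
  have hnorm : ‖t • T‖ = t * ‖B‖ := by
    rw [norm_smul, Real.norm_of_nonneg ht, CStarRing.norm_mul_mem_unitary _ hU,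
      CStarRing.norm_mem_unitary_mul _ (Unitary.star_mem hU)]
  have hdiag : ∀ i, ((t • T) i i).re ≤ a * t := by
    intro i
    have hTii := hB _
      (Unitary.spectrum_star_left_conjugate (R := ℂ) (U := V) ▸ hT.apply_mem_spectrum i)
    rw [smul_apply, Complex.real_smul, Complex.re_ofReal_mul, mul_comm a]
    exact mul_le_mul_of_nonneg_left hTii ht
  have hT' : (t • T).IsUpperTriangular := fun i j hij => by simp [hT hij]
  have hexp : exp (t • B) = V * exp (t • T) * (star V : unitary _) := by
    simpa [hconj] using exp_units_conj (Unitary.toUnits V) (t • T)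
  rw [hexp, CStarRing.norm_mul_coe_unitary, CStarRing.norm_coe_unitary_mul, ← hnorm]
  exact hT'.norm_exp_le hdiag

end Matrix

theorem exp_poly_bound_of_log_spectral_bound_general (m n : ℕ)
    (A : EuclideanSpace ℝ (Fin n) → Matrix (Fin m) (Fin m) ℂ)
    (D' : ℝ) (hD' : 0 < D') (l : ℕ)
    (hA : ∀ ξ : EuclideanSpace ℝ (Fin n), ‖A ξ‖ ≤ D' * (1 + ‖ξ‖) ^ l)
    (C : ℝ) (hC : 0 < C)
    (hspec : ∀ ξ : EuclideanSpace ℝ (Fin n), ∀ lam ∈ spectrum ℂ (A ξ),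
      lam.re ≤ C * (1 + Real.log (1 + ‖ξ‖))) :
    ∀ T : ℝ, 0 < T → ∃ D : ℝ, 0 < D ∧
      ∀ t ∈ Set.Icc (0:ℝ) T, ∀ ξ : EuclideanSpace ℝ (Fin n),
        ‖NormedSpace.exp (t • A ξ)‖ ≤
          D * (1 + ‖ξ‖) ^ (T * C + (l : ℝ) * (m - 1 : ℕ)) := by
  intro T hT
  refine ⟨Real.exp (T * C + 1) * (1 + m ^ 2 * (T * D')) ^ (m - 1), by positivity,
    fun t ⟨ht₀, htT⟩ ξ => ?_⟩
  set x := 1 + ‖ξ‖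
  have hx : 1 ≤ x := le_add_of_nonneg_right (norm_nonneg ξ)
  set c := C * (1 + Real.log x)
  have hc : 0 ≤ c := mul_nonneg hC.le (by linarith [Real.log_nonneg hx])
  have hgrowth : Real.exp (c * T + 1) = Real.exp (T * C + 1) * x ^ (T * C) := by
    rw [Real.rpow_def_of_pos (by linarith), ← Real.exp_add]
    congr 1
    ring
  have hpoly : 1 + m ^ 2 * (t * ‖A ξ‖) ≤ (1 + m ^ 2 * (T * D')) * x ^ l := by
    have hAξ : t * ‖A ξ‖ ≤ T * (D' * x ^ l) := mul_le_mul htT (hA ξ) (norm_nonneg _) hT.le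
    have hxl : 1 ≤ x ^ l := one_le_pow₀ hx
    nlinarith [mul_le_mul_of_nonneg_left hAξ (sq_nonneg (m : ℝ))]
  calc ‖exp (t • A ξ)‖ ≤ Real.exp (c * t + 1) * (1 + m ^ 2 * (t * ‖A ξ‖)) ^ (m - 1) :=
        (A ξ).norm_exp_smul_le_of_re_le (hspec ξ) ht₀
    _ ≤ Real.exp (c * T + 1) * ((1 + m ^ 2 * (T * D')) * x ^ l) ^ (m - 1) :=
        mul_le_mul (Real.exp_le_exp.2 (by gcongr))
          (pow_le_pow_left₀ (by positivity) hpoly _) (by positivity) (Real.exp_nonneg _)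
    _ = _ := by
        rw [hgrowth, Real.rpow_add (by linarith), ← Nat.cast_mul, Real.rpow_natCast, mul_pow,
          ← pow_mul]
        ring

/-- Quantitative form of (2.3) ⇒ (2.4) in Proposition 2.2: if `‖A(ξ)‖ ≤ D'(1+|ξ|)^l` and
`max Re σ(A(ξ)) ≤ C(1 + log(1+|ξ|))`, then for every `T > 0` there is `D > 0` with
`‖exp(tA(ξ))‖ ≤ D (1+|ξ|)^{TC + l(m-1)}` for `t ∈ [0,T]`, `ξ ∈ ℝⁿ`. -/
theorem exp_poly_bound_of_log_spectral_bound (m n : ℕ) (hm : 1 ≤ m) (hn : 1 ≤ n)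
    (A : EuclideanSpace ℝ (Fin n) → Matrix (Fin m) (Fin m) ℂ)
    (D' : ℝ) (hD' : 0 < D') (l : ℕ)
    (hA : ∀ ξ : EuclideanSpace ℝ (Fin n), ‖A ξ‖ ≤ D' * (1 + ‖ξ‖) ^ l)
    (C : ℝ) (hC : 0 < C)
    (hspec : ∀ ξ : EuclideanSpace ℝ (Fin n), ∀ lam ∈ spectrum ℂ (A ξ),
      lam.re ≤ C * (1 + Real.log (1 + ‖ξ‖))) :
    ∀ T : ℝ, 0 < T → ∃ D : ℝ, 0 < D ∧
      ∀ t ∈ Set.Icc (0:ℝ) T, ∀ ξ : EuclideanSpace ℝ (Fin n),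
        ‖NormedSpace.exp (t • A ξ)‖ ≤
          D * (1 + ‖ξ‖) ^ (T * C + (l : ℝ) * (m - 1 : ℕ)) :=
  exp_poly_bound_of_log_spectral_bound_general m n A D' hD' l hA C hC hspec
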